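/- Consistency of the third-order Kelvin theorem with the Taylor–Proudman theorem in ℝ⁴: let λ₁, λ₂ ∈ ℝ with λ₁ ≠ 0 and λ₂ ≠ 0, let u : ℝ⁴ → ℝ⁴ be continuously differentiable and Π : ℝ⁴ → ℝ twice continuously differentiable such that 2(−λ₁ u₂(x), λ₁ u₁(x), −λ₂ u₄(x), λ₂ u₃(x)) = −∇Π(x) for all x ∈ ℝ⁴. Then the dominant condition arising from the third-order Kelvin theorem, namely the vanishing of d ι_u (Ω_R ∧ Ω_R), holds: Σ_{i=1}^{4} u_{i,i} = 0 everywhere. -/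

import Mathlib

/-!
Under the balance, the two components of `u` in each rotation plane `(xᵢ, xⱼ)` are, up to
the factor `1/(2λ)`, the gradient of `Π` in that plane rotated by a quarter turn. The
divergence of such a rotated gradient is `∂ᵢ∂ⱼΠ - ∂ⱼ∂ᵢΠ`, which vanishes by Schwarz's theorem.
-/

/-- The partial derivative `∂ᵢ f` of a scalar function on `ℝ^n` at `x`. -/
noncomputable def pd {n : ℕ} (i : Fin n) (f : (Fin n → ℝ) → ℝ) (x : Fin n → ℝ) : ℝ :=
  fderiv ℝ f x (Pi.single i 1)

section PartialDerivatives

variable {n : ℕ} {f : (Fin n → ℝ) → ℝ}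

lemma differentiable_pd (hf : ContDiff ℝ 2 f) (j : Fin n) : Differentiable ℝ (pd j f) :=
  fun x => (((hf.fderiv_right (m := 1) le_rfl).differentiable one_ne_zero) x).clm_apply
    (differentiableAt_const _)

lemma pd_pd_eq_fderiv_fderiv (hf : ContDiff ℝ 2 f) (i j : Fin n) (x : Fin n → ℝ) :
    pd i (pd j f) x = fderiv ℝ (fderiv ℝ f) x (Pi.single i 1) (Pi.single j 1) := by
  have hdf : Differentiable ℝ (fderiv ℝ f) :=
    (hf.fderiv_right (m := 1) le_rfl).differentiable one_ne_zero
  unfold pd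
  rw [fderiv_clm_apply (hdf x) (differentiableAt_const _)]
  simp

lemma pd_comm (hf : ContDiff ℝ 2 f) (i j : Fin n) (x : Fin n → ℝ) :
    pd i (pd j f) x = pd j (pd i f) x := by
  rw [pd_pd_eq_fderiv_fderiv hf, pd_pd_eq_fderiv_fderiv hf,
    hf.contDiffAt.isSymmSndFDerivAt (by simp)]

lemma pd_const_mul (c : ℝ) {g : (Fin n → ℝ) → ℝ} {x : Fin n → ℝ}
    (hg : DifferentiableAt ℝ g x) (i : Fin n) :
    pd i (fun y => c * g y) x = c * pd i g x := by
  simp only [pd, fderiv_const_mul hg, smul_apply, smul_eq_mul]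

lemma pd_rotated_gradient_add_eq_zero (hf : ContDiff ℝ 2 f) (c : ℝ) (i j : Fin n)
    (x : Fin n → ℝ) :
    pd i (fun y => -c * pd j f y) x + pd j (fun y => c * pd i f y) x = 0 := by
  rw [pd_const_mul _ (differentiable_pd hf j x), pd_const_mul _ (differentiable_pd hf i x),
    pd_comm hf i j]
  ring

theorem pd_add_pd_eq_zero_of_rotation_balance {lam : ℝ} (hlam : lam ≠ 0)
    (hf : ContDiff ℝ 2 f) {v w : (Fin n → ℝ) → ℝ} {i j : Fin n}
    (hw : ∀ y, 2 * (-lam * w y) = -pd i f y) (hv : ∀ y, 2 * (lam * v y) = -pd j f y)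
    (x : Fin n → ℝ) :
    pd i v x + pd j w x = 0 := by
  have hv' : v = fun y => -(2 * lam)⁻¹ * pd j f y := by
    funext y; have := hv y; field_simp; linarith
  have hw' : w = fun y => (2 * lam)⁻¹ * pd i f y := by
    funext y; have := hw y; field_simp; linarith
  rw [hv', hw']
  exact pd_rotated_gradient_add_eq_zero hf _ i j x

end PartialDerivatives

theorem third_order_kelvin_consistency_R4_general
    (lam₁ lam₂ : ℝ) (h₁ : lam₁ ≠ 0) (h₂ : lam₂ ≠ 0)
    (u : (Fin 4 → ℝ) → (Fin 4 → ℝ))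
    (Pr : (Fin 4 → ℝ) → ℝ) (hPr : ContDiff ℝ 2 Pr)
    (hbal : ∀ x : Fin 4 → ℝ,
      2 * (-lam₁ * u x 1) = -(pd 0 Pr x) ∧
      2 * (lam₁ * u x 0) = -(pd 1 Pr x) ∧
      2 * (-lam₂ * u x 3) = -(pd 2 Pr x) ∧
      2 * (lam₂ * u x 2) = -(pd 3 Pr x)) :
    ∀ x : Fin 4 → ℝ,
      pd 0 (fun y => u y 0) x + pd 1 (fun y => u y 1) x +
        pd 2 (fun y => u y 2) x + pd 3 (fun y => u y 3) x = 0 := by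
  intro x
  have plane₀₁ := pd_add_pd_eq_zero_of_rotation_balance h₁ hPr
    (fun y => (hbal y).1) (fun y => (hbal y).2.1) x
  have plane₂₃ := pd_add_pd_eq_zero_of_rotation_balance h₂ hPr
    (fun y => (hbal y).2.2.1) (fun y => (hbal y).2.2.2) x
  linarith

/-- Consistency of the third-order Kelvin theorem with the
Taylor–Proudman theorem in `ℝ⁴`: under the double-rotation geostrophic balance, the
dominant condition `d ι_u (Ω_R ∧ Ω_R) = 0`, i.e. the vanishing of the divergence of `u`,
holds everywhere (0-indexed coordinates). -/
theorem third_order_kelvin_consistency_R4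
    (lam₁ lam₂ : ℝ) (h₁ : lam₁ ≠ 0) (h₂ : lam₂ ≠ 0)
    (u : (Fin 4 → ℝ) → (Fin 4 → ℝ)) (hu : ContDiff ℝ 1 u)
    (Pr : (Fin 4 → ℝ) → ℝ) (hPr : ContDiff ℝ 2 Pr)
    (hbal : ∀ x : Fin 4 → ℝ,
      2 * (-lam₁ * u x 1) = -(pd 0 Pr x) ∧
      2 * (lam₁ * u x 0) = -(pd 1 Pr x) ∧
      2 * (-lam₂ * u x 3) = -(pd 2 Pr x) ∧
      2 * (lam₂ * u x 2) = -(pd 3 Pr x)) :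
    ∀ x : Fin 4 → ℝ,
      pd 0 (fun y => u y 0) x + pd 1 (fun y => u y 1) x +
        pd 2 (fun y => u y 2) x + pd 3 (fun y => u y 3) x = 0 :=
  third_order_kelvin_consistency_R4_general lam₁ lam₂ h₁ h₂ u Pr hPr hbal
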